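/- arXiv:1910.06510 — 5 statements merged into one kernel-verified Lean document; each statement's English description precedes it below -/
import Mathlib

section
/- In an abelian length category, a full subcategory closed under isomorphisms is a torsion class (i.e. the first component of some torsion pair) if and only if it is closed under extensions and quotient objects. -/
open CategoryTheory CategoryTheory.Limits

universe v u

variable {C : Type u} [Category.{v} C] [Abelian C]

/-- `f, g` form a short exact sequence `0 ⟶ X₁ ⟶ X₂ ⟶ X₃ ⟶ 0`. -/
def IsSES {X₁ X₂ X₃ : C} (f : X₁ ⟶ X₂) (g : X₂ ⟶ X₃) : Prop :=
  ∃ w : f ≫ g = 0, (CategoryTheory.ShortComplex.mk f g w).ShortExact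

/-- A torsion pair `(T, F)`. -/
structure TorsionPairOn (T F : Set C) : Prop where
  hom_zero : ∀ X ∈ T, ∀ Y ∈ F, ∀ f : X ⟶ Y, f = 0
  mem_torsion : ∀ X : C, (∀ Y ∈ F, ∀ f : X ⟶ Y, f = 0) → X ∈ T
  mem_free : ∀ Y : C, (∀ X ∈ T, ∀ f : X ⟶ Y, f = 0) → Y ∈ F

def IsoClosed (S : Set C) : Prop := ∀ ⦃X Y : C⦄, (X ≅ Y) → X ∈ S → Y ∈ S

def ExtClosedSet (S : Set C) : Prop :=
  ∀ ⦃X₁ X₂ X₃ : C⦄ (f : X₁ ⟶ X₂) (g : X₂ ⟶ X₃), IsSES f g → X₁ ∈ S → X₃ ∈ S → X₂ ∈ S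

def QuotClosed (S : Set C) : Prop :=
  ∀ ⦃X Y : C⦄ (p : X ⟶ Y), Epi p → X ∈ S → Y ∈ S

structure IsTorsionClass (T : Set C) : Prop where
  zero_mem : ∀ X : C, IsZero X → X ∈ T
  iso_closed : IsoClosed T
  ext_closed : ExtClosedSet T
  quot_closed : QuotClosed T

/-- `T'` covers `T` in the lattice of torsion classes. -/
def CoversTC (T T' : Set C) : Prop :=
  T ⊆ T' ∧ T ≠ T' ∧
    ∀ S : Set C, IsTorsionClass S → T ⊆ S → S ⊆ T' → S = T ∨ S = T'

/-- The extension closure of a class of objects. -/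
inductive ExtClosure (S : Set C) : C → Prop
  | of (X : C) (h : X ∈ S) : ExtClosure S X
  | zero (X : C) (h : IsZero X) : ExtClosure S X
  | iso (X Y : C) (e : X ≅ Y) (h : ExtClosure S X) : ExtClosure S Y
  | ext (X₁ X₂ X₃ : C) (f : X₁ ⟶ X₂) (g : X₂ ⟶ X₃) (hseq : IsSES f g)
      (h₁ : ExtClosure S X₁) (h₃ : ExtClosure S X₃) : ExtClosure S X₂

def IsBrick (X : C) : Prop := ¬ IsZero X ∧ ∀ f : X ⟶ X, f = 0 ∨ IsIso f

def IsIndec (X : C) : Prop :=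
  ¬ IsZero X ∧ ∀ (Y Z : C), (X ≅ Y ⊞ Z) → IsZero Y ∨ IsZero Z

structure IsMinimalExtending (T : Set C) (M : C) : Prop where
  proper_quot_mem : ∀ ⦃Y : C⦄ (p : M ⟶ Y), Epi p → ¬ IsIso p → Y ∈ T
  ext_mem : ∀ ⦃X Tt : C⦄ (f : M ⟶ X) (g : X ⟶ Tt), IsSES f g → Tt ∈ T →
      (¬ ∃ r : X ⟶ M, f ≫ r = 𝟙 M) → X ∈ T
  hom_zero : ∀ ⦃W : C⦄, W ∈ T → ∀ f : W ⟶ M, f = 0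

/-- A finite filtration of `X` by subobjects. -/
structure FiltrationOf (X : C) where
  len : ℕ
  obj : Fin (len + 1) → C
  map : ∀ i : Fin len, obj i.castSucc ⟶ obj i.succ
  mono : ∀ i, Mono (map i)
  zero : IsZero (obj 0)
  top : obj (Fin.last len) ≅ X

noncomputable def FiltrationOf.subquot {X : C} (F : FiltrationOf X) (i : Fin F.len) : C :=
  cokernel (F.map i)

variable {P : Type*} [LinearOrder P]

def Semistable (φ : C → P) (M : C) : Prop :=
  ¬ IsZero M ∧ ∀ ⦃L : C⦄ (f : L ⟶ M), Mono f → ¬ IsZero L → φ L ≤ φ M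

def StableObj (φ : C → P) (M : C) : Prop :=
  ¬ IsZero M ∧ ∀ ⦃L : C⦄ (f : L ⟶ M), Mono f → ¬ IsZero L → ¬ IsIso f → φ L < φ M

structure IsStabilityFunction (φ : C → P) : Prop where
  iso_invariant : ∀ ⦃X Y : C⦄, (X ≅ Y) → φ X = φ Y
  seesaw : ∀ ⦃L M N : C⦄ (f : L ⟶ M) (g : M ⟶ N), IsSES f g →
      ¬ IsZero L → ¬ IsZero M → ¬ IsZero N →
      (φ L = φ M ∧ φ M = φ N) ∨ (φ L < φ M ∧ φ M < φ N) ∨ (φ N < φ M ∧ φ M < φ L)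

/-! A torsion pair is determined by its torsion class `T`: it must be `(⊥(T⊥), T⊥)`, so `T` is a
torsion class exactly when `⊥(T⊥) = T`. Left orthogonals are closed under extensions and
quotients. Conversely, let `T` be so closed and `X ∈ ⊥(T⊥)`. As `X` is noetherian, it has a
maximal subobject `A` lying in `T`. The image `I` of any map from an object of `T` to `X/A` lies
in `T`, hence so does the preimage of `I` in `X`, an extension of `I` by `A`; by maximality this
preimage is `A`, so `I = 0`. Thus `X/A ∈ T⊥`, the projection `X ⟶ X/A` vanishes and `X ≅ A ∈ T`.
-/

namespace CategoryTheory

noncomputable abbrev ShortComplex.pullbackAlong (S : ShortComplex C) {Y : C} (j : Y ⟶ S.X₃) :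
    ShortComplex C where
  X₁ := S.X₁
  X₂ := pullback S.g j
  X₃ := Y
  f := pullback.lift S.f 0 (by rw [S.zero, zero_comp])
  g := pullback.snd _ _
  zero := pullback.lift_snd _ _ _

lemma ShortComplex.ShortExact.pullbackAlong {S : ShortComplex C} (hS : S.ShortExact) {Y : C}
    (j : Y ⟶ S.X₃) :
    (S.pullbackAlong j).ShortExact := by
  have := hS.mono_f
  have := hS.epi_g
  have hf : (S.pullbackAlong j).f ≫ pullback.fst _ _ = S.f := pullback.lift_fst _ _ _
  have : Mono (S.pullbackAlong j).f := mono_of_mono_fac hf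
  have : Epi (S.pullbackAlong j).g := inferInstanceAs (Epi (pullback.snd _ _))
  refine ⟨?_⟩
  rw [ShortComplex.exact_iff_exact_up_to_refinements]
  intro A x₂ hx₂
  obtain ⟨A', π, hπ, x₁, fac⟩ := hS.exact.exact_up_to_refinements (x₂ ≫ pullback.fst _ _)
    (by rw [Category.assoc, pullback.condition, reassoc_of% hx₂, zero_comp])
  refine ⟨A', π, hπ, x₁, pullback.hom_ext ?_ ?_⟩
  · rw [Category.assoc, Category.assoc, hf, fac]
  · rw [Category.assoc, Category.assoc, (S.pullbackAlong j).zero, hx₂, comp_zero, comp_zero]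

namespace ObjectProperty

section HasZeroMorphisms

variable {C : Type u} [Category.{v} C] [HasZeroMorphisms C] (S : ObjectProperty C)

lemma leftOrthogonal_of_isZero {X : C} (hX : IsZero X) : S.leftOrthogonal X :=
  fun _ f _ => hX.eq_of_src f 0

lemma le_leftOrthogonal_rightOrthogonal : S ≤ S.rightOrthogonal.leftOrthogonal :=
  fun _ hX _ f hY => hY f hX

instance : S.leftOrthogonal.IsClosedUnderQuotients where
  prop_of_epi p _ hX _ f hY := by rw [← cancel_epi p, comp_zero, hX (p ≫ f) hY]

end HasZeroMorphisms

instance {C : Type u} [Category.{v} C] [Preadditive C] [Balanced C] (S : ObjectProperty C) :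
    S.leftOrthogonal.IsClosedUnderExtensions where
  prop_X₂_of_shortExact {E} hE h₁ h₃ _ f hY := by
    have := hE.epi_g
    have hf : E.f ≫ f = 0 := h₁ _ hY
    rw [← hE.exact.g_desc f hf, h₃ (hE.exact.desc f hf) hY, comp_zero]

section Abelian

variable {C : Type u} [Category.{v} C] [Abelian C] (S : ObjectProperty C)
  [S.IsClosedUnderExtensions] [S.IsClosedUnderQuotients]

lemma rightOrthogonal_cokernel_of_maximal {X : C} {A : Subobject X} (hA : S A)
    (hmax : ∀ B : Subobject X, S B → ¬ A < B) : S.rightOrthogonal (cokernel A.arrow) := by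
  intro W f hW
  let E := (ShortComplex.mk A.arrow (cokernel.π A.arrow) (cokernel.condition _)).pullbackAlong
    (image.ι f)
  have hE : S E.X₂ := S.prop_X₂_of_shortExact
    (ShortComplex.ShortExact.pullbackAlong { exact := ShortComplex.exact_cokernel _ } _)
    hA (S.prop_of_epi (factorThruImage f) hW)
  -- the preimage of `image f` in `X`, which contains `A`
  let B := Subobject.mk (pullback.fst (cokernel.π A.arrow) (image.ι f))
  have hAB : A ≤ B := Subobject.le_mk_of_comm E.f (pullback.lift_fst _ _ _)
  have hBA : B ≤ A := by
    by_contra h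
    exact hmax B (S.prop_of_iso (Subobject.underlyingIso _).symm hE) (lt_of_le_not_ge hAB h)
  have : pullback.snd (cokernel.π A.arrow) (image.ι f) ≫ image.ι f = 0 := by
    rw [← pullback.condition, ← Subobject.ofMkLE_arrow hBA, Category.assoc, cokernel.condition,
      comp_zero]
  rw [← image.fac f, (cancel_epi (pullback.snd _ _)).1 (this.trans comp_zero.symm), comp_zero]

lemma prop_of_leftOrthogonal_rightOrthogonal [S.ContainsZero] {X : C} [IsNoetherianObject X]
    (hX : S.rightOrthogonal.leftOrthogonal X) : S X := by
  obtain ⟨A, hA, hmax⟩ := (wellFounded_gt (α := Subobject X)).has_min {A | S A}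
    ⟨⊥, S.prop_of_isZero (IsZero.of_iso (isZero_zero C) Subobject.botCoeIsoZero)⟩
  have : Epi A.arrow := Abelian.epi_of_cokernel_π_eq_zero _
    (hX _ (S.rightOrthogonal_cokernel_of_maximal hA hmax))
  have := isIso_of_mono_of_epi A.arrow
  exact S.prop_of_iso (asIso A.arrow) hA

end Abelian

end ObjectProperty

end CategoryTheory

open ObjectProperty

lemma extClosedSet_iff (T : Set C) : ExtClosedSet T ↔ IsClosedUnderExtensions (· ∈ T) :=
  ⟨fun h => ⟨fun {E} hE h₁ h₃ => h E.f E.g ⟨E.zero, hE⟩ h₁ h₃⟩,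
    fun _ _ _ _ _ _ ⟨_, hE⟩ h₁ h₃ => prop_X₂_of_shortExact (· ∈ T) hE h₁ h₃⟩

lemma quotClosed_iff {C : Type u} [Category.{v} C] (T : Set C) :
    QuotClosed T ↔ IsClosedUnderQuotients (· ∈ T) :=
  ⟨fun h => ⟨fun p _ hX => h p inferInstance hX⟩, fun _ _ _ p _ hX => prop_of_epi (· ∈ T) p hX⟩

lemma exists_torsionPairOn_iff (T : Set C) :
    (∃ F : Set C, TorsionPairOn T F) ↔ leftOrthogonal (rightOrthogonal (· ∈ T)) = (· ∈ T) := by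
  constructor
  · rintro ⟨F, h⟩
    refine le_antisymm (fun X hX => h.mem_torsion X fun Y hY f => hX f ?_)
      (le_leftOrthogonal_rightOrthogonal _)
    exact fun W g hW => h.hom_zero W hW Y hY g
  · intro h
    exact ⟨{Y | rightOrthogonal (· ∈ T) Y}, fun X hX Y hY f => hY f hX,
      fun X hX => h.le X fun Y f hY => hX Y hY f, fun Y hY X f hX => hY X hX f⟩

/-- in an abelian length category, a class of objects closed under
isomorphisms is a torsion class (first component of a torsion pair) if and only if
it is closed under extensions and quotient objects (and contains the zero objects). -/
theorem isTorsionClass_iff_ext_quot_closed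
    {C : Type u} [Category.{v} C] [Abelian C]
    [∀ X : C, IsNoetherianObject X] [∀ X : C, IsArtinianObject X]
    (T : Set C) (hiso : IsoClosed T) :
    (∃ F : Set C, TorsionPairOn T F) ↔
      ((∀ X : C, IsZero X → X ∈ T) ∧ ExtClosedSet T ∧ QuotClosed T) := by
  rw [exists_torsionPairOn_iff, extClosedSet_iff, quotClosed_iff]
  constructor
  · intro h
    rw [← h]
    exact ⟨fun X hX => h.le X (leftOrthogonal_of_isZero _ hX), inferInstance, inferInstance⟩
  · rintro ⟨hzero, hext, hquot⟩
    have : ContainsZero (· ∈ T) := ⟨_, isZero_zero C, hzero _ (isZero_zero C)⟩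
    exact le_antisymm (fun X => prop_of_leftOrthogonal_rightOrthogonal (· ∈ T))
      (le_leftOrthogonal_rightOrthogonal _)
end

section
/- Let X be a brick (an object whose endomorphism ring is a division ring) in an abelian length category A. Then the full subcategory Filt(X) of objects admitting a finite filtration with all subquotients isomorphic to X is a wide subcategory of A, i.e. an abelian subcategory closed under extensions. -/
/-!
`Filt(X)` is the extension closure of `X`, and every object in it has a filtration
`0 → X → M → M' → 0` with `M'` filtered by one copy fewer.  Since `X` is a brick, a nonzero
map `X → N` into a filtered object is a mono with filtered cokernel: either it lands in the
bottom copy of `X`, where it is an isomorphism, or its composite with `N → N'` is such a mono.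
For `f : M → N` we induct on the filtration of `M`.  If `X → M → N` vanishes, `f` factors
through `M'` and `ker f` is an extension of the kernel of `M' → N` by `X`; otherwise
`X → N` is a mono and `f` has the same kernel and cokernel as the induced map
`M' → N / X`.  All the short exact sequences needed come from the six-term exact sequence
`0 → ker f → ker (f ≫ g) → ker g → coker f → coker (f ≫ g) → coker g → 0`.
-/

open CategoryTheory CategoryTheory.Limits

universe v u

variable {C : Type u} [Category.{v} C] [Abelian C]

variable {P : Type*} [LinearOrder P]

lemma isSES_of_exact {X₁ X₂ X₃ : C} {f : X₁ ⟶ X₂} {g : X₂ ⟶ X₃} (w : f ≫ g = 0)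
    (h : (ShortComplex.mk f g w).Exact) [Mono f] [Epi g] : IsSES f g :=
  ⟨w, .mk' h inferInstance inferInstance⟩

lemma isSES_cokernel {X₁ X₂ : C} (f : X₁ ⟶ X₂) [Mono f] : IsSES f (cokernel.π f) :=
  isSES_of_exact _ (ShortComplex.exact_cokernel f)

namespace IsSES

variable {X₁ X₂ X₃ : C} {f : X₁ ⟶ X₂} {g : X₂ ⟶ X₃}

noncomputable def kernelIso (h : IsSES f g) : kernel g ≅ X₁ :=
  have := h.2.mono_f
  IsLimit.conePointUniqueUpToIso (kernelIsKernel g) h.2.exact.fIsKernel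

noncomputable def cokernelIso (h : IsSES f g) : cokernel f ≅ X₃ :=
  have := h.2.epi_g
  IsColimit.coconePointUniqueUpToIso (cokernelIsCokernel f) h.2.exact.gIsCokernel

end IsSES

section CompSequence

open kernelCokernelCompSequence

variable {A B D : C} (f : A ⟶ B) (g : B ⟶ D)

lemma isSES_kernelMap_of_epi [Epi f] :
    IsSES (kernel.map f (f ≫ g) (𝟙 _) g (by simp)) (kernel.map (f ≫ g) g f (𝟙 _) (by simp)) := by
  have hK := kernelCokernelCompSequence_exact f g
  have : Epi (kernel.map (f ≫ g) g f (𝟙 _) (by simp)) :=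
    (hK.exact 1).epi_f (IsZero.eq_of_tgt (isZero_cokernel_of_epi f) _ _)
  have : Mono (kernel.map f (f ≫ g) (𝟙 _) g (by simp)) :=
    inferInstanceAs (Mono ((kernelCokernelCompSequence f g).map' 0 1))
  exact isSES_of_exact _ (hK.exact 0)

lemma isSES_cokernelMap_of_mono [Mono g] :
    IsSES (cokernel.map f (f ≫ g) (𝟙 _) g (by simp))
      (cokernel.map (f ≫ g) g f (𝟙 _) (by simp)) := by
  have hK := kernelCokernelCompSequence_exact f g
  have : Mono (cokernel.map f (f ≫ g) (𝟙 _) g (by simp)) :=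
    (hK.exact 2).mono_g (IsZero.eq_of_src (isZero_kernel_of_mono g) _ _)
  have : Epi (cokernel.map (f ≫ g) g f (𝟙 _) (by simp)) :=
    inferInstanceAs (Epi ((kernelCokernelCompSequence f g).map' 4 5))
  exact isSES_of_exact _ (hK.exact 3)

lemma isSES_δ_cokernelMap [Mono (f ≫ g)] [Epi g] :
    IsSES (δ f g) (cokernel.map f (f ≫ g) (𝟙 _) g (by simp)) := by
  have hK := kernelCokernelCompSequence_exact f g
  have : Mono (δ f g) :=
    (hK.exact 1).mono_g (IsZero.eq_of_src (isZero_kernel_of_mono (f ≫ g)) _ _)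
  have : Epi (cokernel.map f (f ≫ g) (𝟙 _) g (by simp)) :=
    (hK.exact 3).epi_f (IsZero.eq_of_tgt (isZero_cokernel_of_epi g) _ _)
  exact isSES_of_exact _ (hK.exact 2)

variable [Mono (f ≫ g)]

noncomputable def kernelIsoKernelCokernelMap :
    kernel g ≅ kernel (cokernel.map f (f ≫ g) (𝟙 _) g (by simp)) :=
  have hK := kernelCokernelCompSequence_exact f g
  have : Mono ((kernelCokernelCompSequence f g).map' 2 3) :=
    (hK.exact 1).mono_g (IsZero.eq_of_src (isZero_kernel_of_mono (f ≫ g)) _ _)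
  IsLimit.conePointUniqueUpToIso (hK.exact 2).fIsKernel (limit.isLimit _)

noncomputable def cokernelIsoCokernelCokernelMap :
    cokernel g ≅ cokernel (cokernel.map f (f ≫ g) (𝟙 _) g (by simp)) :=
  have hK := kernelCokernelCompSequence_exact f g
  have : Epi (cokernel.map (f ≫ g) g f (𝟙 _) (by simp)) :=
    inferInstanceAs (Epi ((kernelCokernelCompSequence f g).map' 4 5))
  IsColimit.coconePointUniqueUpToIso (hK.exact 3).gIsCokernel (colimit.isColimit _)

end CompSequence

def FiltOfLength (X : C) : ℕ → C → Prop
  | 0, M => IsZero M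
  | n + 1, M => ∃ i : X ⟶ M, Mono i ∧ FiltOfLength X n (cokernel i)

namespace FiltOfLength

variable {X : C}

lemma of_iso : ∀ {n : ℕ} {M N : C}, FiltOfLength X n M → (M ≅ N) → FiltOfLength X n N
  | 0, _, _, hM, e => IsZero.of_iso hM e.symm
  | _ + 1, _, _, ⟨i, _, hM⟩, e =>
    ⟨i ≫ e.hom, mono_comp _ _, hM.of_iso (cokernelCompIsIso i e.hom).symm⟩

lemma succ_of_isSES {n : ℕ} {K M M' : C} {i : K ⟶ M} {p : M ⟶ M'} (e : K ≅ X) (h : IsSES i p)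
    (hM' : FiltOfLength X n M') : FiltOfLength X (n + 1) M :=
  have := h.2.mono_f
  ⟨e.inv ≫ i, mono_comp _ _, hM'.of_iso (h.cokernelIso.symm ≪≫ (cokernelEpiComp e.inv i).symm)⟩

lemma add_of_isSES {b : ℕ} :
    ∀ {a : ℕ} {A E B : C} {f : A ⟶ E} {g : E ⟶ B}, IsSES f g → FiltOfLength X a A →
      FiltOfLength X b B → FiltOfLength X (a + b) E
  | 0, _, _, _, f, _, h, hA, hB => by
    have hf : f = 0 := IsZero.eq_of_src hA _ _
    rw [Nat.zero_add]
    exact hB.of_iso (h.cokernelIso.symm ≪≫ cokernelIsoOfEq hf ≪≫ cokernelZeroIsoTarget)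
  | _ + 1, _, _, _, f, _, h, ⟨i, _, hA⟩, hB => by
    have := h.2.mono_f
    rw [Nat.add_right_comm]
    exact ⟨i ≫ f, mono_comp _ _,
      add_of_isSES (isSES_cokernelMap_of_mono i f) hA (hB.of_iso h.cokernelIso.symm)⟩

end FiltOfLength

lemma extClosure_singleton_iff_exists_filtOfLength {X M : C} :
    ExtClosure {X} M ↔ ∃ n, FiltOfLength X n M := by
  constructor
  · intro h
    induction h with
    | of _ hY =>
      obtain rfl : _ = X := hY
      exact ⟨1, 𝟙 _, inferInstance, isZero_cokernel_of_epi _⟩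
    | zero _ hY => exact ⟨0, hY⟩
    | iso _ _ e _ ih =>
      obtain ⟨n, hn⟩ := ih
      exact ⟨n, hn.of_iso e⟩
    | ext _ _ _ _ _ hses _ _ ih₁ ih₃ =>
      obtain ⟨a, ha⟩ := ih₁
      obtain ⟨b, hb⟩ := ih₃
      exact ⟨a + b, .add_of_isSES hses ha hb⟩
  · rintro ⟨n, hn⟩
    induction n generalizing M with
    | zero => exact .zero M hn
    | succ n ih =>
      obtain ⟨i, _, hn⟩ := hn
      exact .ext _ _ _ i _ (isSES_cokernel i) (.of X rfl) (ih hn)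

lemma IsBrick.mono_and_filtOfLength_cokernel {X : C} (hX : IsBrick X) :
    ∀ {n : ℕ} {N : C}, FiltOfLength X (n + 1) N → ∀ g : X ⟶ N, g ≠ 0 →
      Mono g ∧ FiltOfLength X n (cokernel g)
  | n, _, ⟨j, _, hN⟩, g, hg => by
    by_cases hgq : g ≫ cokernel.π j = 0
    · have hfac : Abelian.monoLift j g hgq ≫ j = g := Abelian.monoLift_comp j g hgq
      have : IsIso (Abelian.monoLift j g hgq) :=
        (hX.2 _).resolve_left fun h0 => hg (by rw [← hfac, h0, zero_comp])
      rw [← hfac]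
      exact ⟨mono_comp _ _, hN.of_iso (cokernelEpiComp _ j).symm⟩
    · cases n with
      | zero => exact absurd (IsZero.eq_of_tgt hN _ _) hgq
      | succ n =>
        obtain ⟨_, hcok⟩ := hX.mono_and_filtOfLength_cokernel hN _ hgq
        have : Mono g := mono_of_mono g (cokernel.π j)
        exact ⟨this, .succ_of_isSES (isSES_cokernel j).kernelIso
          (isSES_δ_cokernelMap g (cokernel.π j)) hcok⟩

lemma IsBrick.extClosure_kernel_and_cokernel {X : C} (hX : IsBrick X) :
    ∀ {m n : ℕ} {M N : C}, FiltOfLength X m M → FiltOfLength X n N → ∀ f : M ⟶ N,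
      ExtClosure {X} (kernel f) ∧ ExtClosure {X} (cokernel f)
  | 0, n, _, _, hM, hN, f => by
    have hf : f = 0 := IsZero.eq_of_src hM _ _
    refine ⟨.zero _ (IsZero.of_iso hM (kernelIsoOfEq hf ≪≫ kernelZeroIsoSource)), ?_⟩
    exact .iso _ _ (cokernelIsoOfEq hf ≪≫ cokernelZeroIsoTarget).symm
      (extClosure_singleton_iff_exists_filtOfLength.2 ⟨n, hN⟩)
  | _ + 1, n, _, _, ⟨i, _, hM⟩, hN, f => by
    by_cases hif : i ≫ f = 0
    · obtain ⟨f', rfl⟩ : ∃ f', cokernel.π i ≫ f' = f :=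
        ⟨cokernel.desc i f hif, cokernel.π_desc _ _ _⟩
      obtain ⟨hker, hcok⟩ := hX.extClosure_kernel_and_cokernel hM hN f'
      exact ⟨.ext _ _ _ _ _ (isSES_kernelMap_of_epi (cokernel.π i) f')
          (.iso _ _ (isSES_cokernel i).kernelIso.symm (.of X rfl)) hker,
        .iso _ _ (cokernelEpiComp _ _).symm hcok⟩
    · cases n with
      | zero => exact absurd (IsZero.eq_of_tgt hN _ _) hif
      | succ n =>
        obtain ⟨_, hN'⟩ := hX.mono_and_filtOfLength_cokernel hN _ hif
        obtain ⟨hker, hcok⟩ := hX.extClosure_kernel_and_cokernel hM hN'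
          (cokernel.map i (i ≫ f) (𝟙 _) f (by simp))
        exact ⟨.iso _ _ (kernelIsoKernelCokernelMap i f).symm hker,
          .iso _ _ (cokernelIsoCokernelCokernelMap i f).symm hcok⟩

/-- if `X` is a brick in an abelian length category, then `Filt(X)`,
the objects filtered by copies of `X`, form a wide subcategory: closed under
kernels, cokernels and extensions. -/
theorem filt_of_brick_is_wide
    {C : Type u} [Category.{v} C] [Abelian C]
    [∀ X : C, IsNoetherianObject X] [∀ X : C, IsArtinianObject X]
    (X : C) (hX : IsBrick X) :
    (∀ (A B : C) (f : A ⟶ B), ExtClosure {X} A → ExtClosure {X} B →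
        ExtClosure {X} (kernel f) ∧ ExtClosure {X} (cokernel f)) ∧
    ExtClosedSet {M : C | ExtClosure {X} M} := by
  refine ⟨fun A B f hA hB => ?_, fun _ _ _ f g hses h₁ h₃ => .ext _ _ _ f g hses h₁ h₃⟩
  obtain ⟨m, hm⟩ := extClosure_singleton_iff_exists_filtOfLength.1 hA
  obtain ⟨n, hn⟩ := extClosure_singleton_iff_exists_filtOfLength.1 hB
  exact hX.extClosure_kernel_and_cokernel hm hn f
end

section
/- Let T be a torsion class in an abelian length category and M ∉ T an indecomposable object each of whose proper quotients lies in T. Let N ∈ Filt(T ∪ {M}) ∖ T be such that each proper quotient of N lies in T. If Filt(T ∪ {M}) covers T in the lattice of torsion classes, then M ≅ N. -/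
open CategoryTheory CategoryTheory.Limits

universe v u

variable {C : Type u} [Category.{v} C] [Abelian C]

variable {P : Type*} [LinearOrder P]

/-! A nonzero morphism from an object of `T` to `N` would make `N` an extension of its image
(in `T`) by a proper quotient (in `T`), so `N ∈ T^⊥`, and likewise `M ∈ T^⊥`. Every quotient of
`N` is in `T` or isomorphic to `N`, so `Filt(T ∪ {N})` is a torsion class with
`T ⊊ Filt(T ∪ {N}) ⊆ Filt(T ∪ {M})`; by the covering property `M ∈ Filt(T ∪ {N})`. A nonzero
object of `Filt(T ∪ {X}) ∩ T^⊥` receives a nonzero morphism from `X`, and a nonzero morphism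
from `X` into `T^⊥` is mono when all proper quotients of `X` lie in `T`. This yields
monomorphisms `M ⟶ N ⟶ M`, and a monomorphic endomorphism of an artinian object is invertible. -/

def ProperQuotientsIn (T : Set C) (X : C) : Prop :=
  ∀ ⦃Y : C⦄ (p : X ⟶ Y), Epi p → ¬ IsIso p → Y ∈ T

section

variable {X Y : C}

lemma isSES_cokernel_π (m : X ⟶ Y) [Mono m] : IsSES m (cokernel.π m) :=
  ⟨cokernel.condition m,
    { exact := ShortComplex.exact_of_g_is_cokernel _ (cokernelIsCokernel m) }⟩

lemma isIso_of_mono_of_isArtinianObject {D : Type*} [Category D] {X : D} [IsArtinianObject X]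
    (h : X ⟶ X) [Mono h] :
    IsIso h := by
  by_contra hh
  have hlt : (Subobject.map h).obj ⊤ < ⊤ := by
    rw [Subobject.map_top]
    exact lt_top_iff_ne_top.2 fun e => hh ((Subobject.isIso_iff_mk_eq_top h).2 e)
  have hmap : StrictMono (Subobject.map h).obj :=
    (Subobject.map h).monotone.strictMono_of_injective (Subobject.map_obj_injective h)
  refine not_strictAnti_of_isArtinianObject (fun n => (Subobject.map h).obj^[n] ⊤)
    (strictAnti_nat_of_succ_lt fun n => ?_)
  rw [Function.iterate_succ_apply]
  exact hmap.iterate n hlt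

lemma isIso_of_mono_of_mono [IsArtinianObject Y] (f : X ⟶ Y) (g : Y ⟶ X) [Mono f] [Mono g] :
    IsIso f := by
  have : IsIso (g ≫ f) := isIso_of_mono_of_isArtinianObject _
  have : Epi f := epi_of_epi g f
  exact isIso_of_mono_of_epi f

lemma exists_isSES_of_epi {X₁ X₂ X₃ : C} {f : X₁ ⟶ X₂} {g : X₂ ⟶ X₃} (hfg : IsSES f g)
    (p : X₂ ⟶ Y) [Epi p] :
    ∃ (Y₁ Y₃ : C) (i : Y₁ ⟶ Y) (q : Y ⟶ Y₃) (p₁ : X₁ ⟶ Y₁) (p₃ : X₃ ⟶ Y₃),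
      IsSES i q ∧ Epi p₁ ∧ Epi p₃ := by
  have := hfg.2.epi_g
  set i := Abelian.image.ι (f ≫ p)
  have hfc : f ≫ p ≫ cokernel.π i = 0 := by
    have := Abelian.factorThruImage (f ≫ p) ≫= cokernel.condition i
    rwa [← Category.assoc, Abelian.image.fac, comp_zero, Category.assoc] at this
  obtain ⟨d, hd⟩ := CokernelCofork.IsColimit.desc' hfg.2.gIsCokernel _ hfc
  have hgd : g ≫ d = p ≫ cokernel.π i := hd
  have : Epi (g ≫ d) := by rw [hgd]; infer_instance
  exact ⟨_, _, i, cokernel.π i, Abelian.factorThruImage (f ≫ p), d, isSES_cokernel_π i,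
    inferInstance, epi_of_epi g d⟩

end

namespace ExtClosure

variable {S S' : Set C}

lemma of_extClosure (h : ∀ X ∈ S, ExtClosure S' X) {X : C} (hX : ExtClosure S X) :
    ExtClosure S' X := by
  induction hX with
  | of X hX => exact h X hX
  | zero X hX => exact .zero X hX
  | iso X Y e _ ih => exact .iso X Y e ih
  | ext X₁ X₂ X₃ f g hfg _ _ ih₁ ih₃ => exact .ext X₁ X₂ X₃ f g hfg ih₁ ih₃

lemma quotClosed (h : ∀ X ∈ S, ∀ ⦃Y : C⦄ (p : X ⟶ Y), Epi p → ExtClosure S Y) :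
    QuotClosed {X : C | ExtClosure S X} := by
  intro X Y p hp hX
  induction hX generalizing Y with
  | of X hX => exact h X hX p hp
  | zero X hX => exact .zero Y (hX.of_epi p)
  | iso X X' e _ ih => exact ih (e.hom ≫ p) inferInstance
  | ext X₁ X₂ X₃ f g hfg _ _ ih₁ ih₃ =>
      obtain ⟨Y₁, Y₃, i, q, p₁, p₃, hiq, hp₁, hp₃⟩ := exists_isSES_of_epi hfg p
      exact .ext Y₁ Y Y₃ i q hiq (ih₁ p₁ hp₁) (ih₃ p₃ hp₃)

lemma isTorsionClass (h : ∀ X ∈ S, ∀ ⦃Y : C⦄ (p : X ⟶ Y), Epi p → ExtClosure S Y) :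
    IsTorsionClass {X : C | ExtClosure S X} where
  zero_mem := .zero
  iso_closed _ _ := .iso _ _
  ext_closed _ _ _ := .ext _ _ _
  quot_closed := quotClosed h

lemma isTorsionClass_union_singleton {T : Set C} (hT : IsTorsionClass T) {N : C}
    (hN : ProperQuotientsIn T N) :
    IsTorsionClass {X : C | ExtClosure (T ∪ {N}) X} := by
  refine isTorsionClass fun X hX Y p hp => ?_
  rcases hX with hX | rfl
  · exact .of Y (.inl (hT.quot_closed p hp hX))
  · by_cases hiso : IsIso p
    · exact .iso X Y (asIso p) (.of X (.inr rfl))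
    · exact .of Y (.inl (hN p hp hiso))

end ExtClosure

def torsionFree (T : Set C) : Set C := {Y | ∀ X ∈ T, ∀ f : X ⟶ Y, f = 0}

section

variable {T : Set C} {X Y : C}

lemma torsionFree.of_mono (m : X ⟶ Y) [Mono m] (hY : Y ∈ torsionFree T) :
    X ∈ torsionFree T := fun W hW f =>
  zero_of_comp_mono m (hY W hW (f ≫ m))

lemma torsionFree.of_iso (e : X ≅ Y) (hX : X ∈ torsionFree T) : Y ∈ torsionFree T :=
  torsionFree.of_mono e.inv hX

lemma isZero_of_mem_of_mem_torsionFree (hX : X ∈ T) (hX' : X ∈ torsionFree T) : IsZero X :=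
  (IsZero.iff_id_eq_zero _).2 (hX' X hX (𝟙 X))

lemma mem_torsionFree_of_proper_quot (hT : IsTorsionClass T) (hX : X ∉ T)
    (hq : ProperQuotientsIn T X) : X ∈ torsionFree T := by
  intro W hW φ
  by_contra hφ
  set i := Abelian.image.ι φ
  have hI : Abelian.image φ ∈ T := hT.quot_closed (Abelian.factorThruImage φ) inferInstance hW
  have hQ : cokernel i ∈ T := hq (cokernel.π i) inferInstance fun _ => hφ <| by
    rw [← Abelian.image.fac φ, ← cancel_mono (cokernel.π i), Category.assoc, cokernel.condition,
      comp_zero, zero_comp]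
  exact hX (hT.ext_closed i (cokernel.π i) (isSES_cokernel_π i) hI hQ)

lemma mono_of_ne_zero (hq : ProperQuotientsIn T X) (hY : Y ∈ torsionFree T) (f : X ⟶ Y)
    (hf : f ≠ 0) : Mono f := by
  have : IsIso (Abelian.factorThruImage f) := by
    by_contra hiso
    have hI := hq (Abelian.factorThruImage f) inferInstance hiso
    exact hf (by rw [← Abelian.image.fac f, hY _ hI (Abelian.image.ι f), comp_zero])
  rw [← Abelian.image.fac f]
  infer_instance

lemma exists_ne_zero_hom_of_extClosure {M : C} (hX : ExtClosure (T ∪ {M}) X)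
    (hXT : X ∈ torsionFree T) (hX₀ : ¬ IsZero X) : ∃ f : M ⟶ X, f ≠ 0 := by
  induction hX with
  | of X hX =>
      rcases hX with hX | rfl
      · exact absurd (isZero_of_mem_of_mem_torsionFree hX hXT) hX₀
      · exact ⟨𝟙 X, fun h => hX₀ ((IsZero.iff_id_eq_zero _).2 h)⟩
  | zero X hX => exact absurd hX hX₀
  | iso X Y e _ ih =>
      obtain ⟨f, hf⟩ := ih (torsionFree.of_iso e.symm hXT) fun h => hX₀ (h.of_iso e.symm)
      exact ⟨f ≫ e.hom, fun h => hf (by simpa using h =≫ e.inv)⟩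
  | ext X₁ X₂ X₃ f g hfg _ _ ih₁ ih₃ =>
      have := hfg.2.mono_f
      have := hfg.2.epi_g
      by_cases hX₁ : IsZero X₁
      · have : Mono g := hfg.2.exact.mono_g (hX₁.eq_of_src f 0)
        have : IsIso g := isIso_of_mono_of_epi g
        obtain ⟨u, hu⟩ := ih₃ (torsionFree.of_iso (asIso g) hXT) fun h => hX₀ (h.of_iso (asIso g))
        exact ⟨u ≫ inv g, fun h => hu (by simpa using h =≫ g)⟩
      · obtain ⟨u, hu⟩ := ih₁ (torsionFree.of_mono f hXT) hX₁
        exact ⟨u ≫ f, fun h => hu (zero_of_comp_mono f h)⟩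

end

/-- if `Filt(T ∪ {M})` covers `T` in the lattice of torsion classes,
then the only object `N ∈ Filt(T ∪ {M}) ∖ T` all of whose proper quotients lie in
`T` is `M` itself (up to isomorphism). -/
theorem cover_unique_extending_object
    {C : Type u} [Category.{v} C] [Abelian C]
    [∀ X : C, IsNoetherianObject X] [∀ X : C, IsArtinianObject X]
    (T : Set C) (hT : IsTorsionClass T) (M : C) (hM : IsIndec M) (hMT : M ∉ T)
    (hquotM : ∀ ⦃Y : C⦄ (p : M ⟶ Y), Epi p → ¬ IsIso p → Y ∈ T)
    (N : C) (hNmem : ExtClosure (T ∪ {M}) N) (hNT : N ∉ T)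
    (hquotN : ∀ ⦃Y : C⦄ (p : N ⟶ Y), Epi p → ¬ IsIso p → Y ∈ T)
    (hcov : CoversTC T {X : C | ExtClosure (T ∪ {M}) X}) :
    Nonempty (M ≅ N) := by
  have hMF := mem_torsionFree_of_proper_quot hT hMT hquotM
  have hNF := mem_torsionFree_of_proper_quot hT hNT hquotN
  have hFiltN_le : {X : C | ExtClosure (T ∪ {N}) X} ⊆ {X : C | ExtClosure (T ∪ {M}) X} :=
    fun _ => ExtClosure.of_extClosure fun Z hZ => by
      rcases hZ with hZ | rfl
      exacts [.of Z (.inl hZ), hNmem]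
  have hMN : ExtClosure (T ∪ {N}) M := by
    rcases hcov.2.2 _ (ExtClosure.isTorsionClass_union_singleton hT hquotN)
      (fun Z hZ => .of Z (.inl hZ)) hFiltN_le with h | h
    · exact absurd (h ▸ ExtClosure.of N (.inr rfl)) hNT
    · have hM' : M ∈ {X : C | ExtClosure (T ∪ {M}) X} := .of M (.inr rfl)
      rwa [← h] at hM'
  obtain ⟨f, hf⟩ := exists_ne_zero_hom_of_extClosure hNmem hNF fun h => hNT (hT.zero_mem N h)
  obtain ⟨g, hg⟩ := exists_ne_zero_hom_of_extClosure hMN hMF fun h => hMT (hT.zero_mem M h)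
  have := mono_of_ne_zero hquotM hNF f hf
  have := mono_of_ne_zero hquotN hMF g hg
  have := isIso_of_mono_of_mono f g
  exact ⟨asIso f⟩
end

section
/- Let N₁, N₂, …, N_m be a complete forward hom-orthogonal sequence of bricks in an abelian length category A. Then every simple object of A is isomorphic to some N_i; moreover N₁ and N_m are simple. -/
open CategoryTheory CategoryTheory.Limits

universe v u

variable {C : Type u} [Category.{v} C] [Abelian C]

variable {P : Type*} [LinearOrder P]

/-- A complete forward hom-orthogonal sequence of bricks. -/
structure IsCFHO {C : Type u} [Category.{v} C] [Abelian C]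
    (m : ℕ) (N : Fin m → C) : Prop where
  brick : ∀ i, IsBrick (N i)
  forward_orth : ∀ i j : Fin m, i < j → ∀ f : N i ⟶ N j, f = 0
  maximal : ¬ ∃ (B : C) (k : ℕ), k ≤ m ∧ IsBrick B ∧
      (∀ i : Fin m, i.val < k → ∀ f : N i ⟶ B, f = 0) ∧
      (∀ j : Fin m, k ≤ j.val → ∀ f : B ⟶ N j, f = 0)
  generates : ∀ T : Set C, IsTorsionClass T → (∀ i, N i ∈ T) → ∀ X : C, X ∈ T

/-! Every simple object `S` is some `N i`: otherwise `S` could be inserted in front of the first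
`N k` admitting a nonzero map to `S`, because a nonzero composite `N k ⟶ S ⟶ N j` forces `j ≤ k`,
and `j = k` would make `S ≅ N k` (a nonzero endomorphism of a brick is invertible). The first
term has a simple quotient and the last a simple subobject; each of these is some `N i`, and
forward orthogonality forces `i` to be that first or last index, so the quotient (subobject) map
is an isomorphism. -/

open Opposite

lemma isArtinianObject_op (X : C) [IsNoetherianObject X] : IsArtinianObject (op X) :=
  let e := Abelian.subobjectIsoSubobjectOp X
  ⟨StrictAnti.wellFoundedLT (f := fun Y => e.symm (OrderDual.toDual Y))
    fun _ _ h => e.symm.strictMono (OrderDual.toDual_lt_toDual.2 h)⟩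

lemma Simple.unop {X : Cᵒᵖ} [Simple X] : Simple X.unop :=
  simple_of_cosimple _ fun f _ =>
    (isIso_op_iff f).symm.trans <|
      (Simple.mono_isIso_iff_nonzero f.op).trans (Quiver.Hom.op_inj.ne_iff' (op_zero _ _))

lemma exists_simple_quotient {X : C} [IsNoetherianObject X] (h : ¬IsZero X) :
    ∃ (S : C) (p : X ⟶ S), Epi p ∧ Simple S := by
  have := isArtinianObject_op X
  obtain ⟨Y, hY⟩ := exists_simple_subobject (X := op X) fun hz => h hz.unop
  exact ⟨(Y : Cᵒᵖ).unop, Y.arrow.unop, inferInstance, Simple.unop⟩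

lemma comp_ne_zero_of_mono {X Y Z : C} {f : X ⟶ Y} {g : Y ⟶ Z} [Mono g] (hf : f ≠ 0) :
    f ≫ g ≠ 0 :=
  fun h => hf ((cancel_mono g).1 (h.trans zero_comp.symm))

lemma Simple.isBrick (S : C) [Simple S] : IsBrick S :=
  ⟨Simple.not_isZero S, fun _ => or_iff_not_imp_left.2 isIso_of_hom_simple⟩

lemma IsBrick.isIso_of_ne_zero_of_simple {B S : C} [Simple S] (hB : IsBrick B) {f : B ⟶ S}
    {g : S ⟶ B} (hf : f ≠ 0) (hg : g ≠ 0) : IsIso f ∧ IsIso g := by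
  have := epi_of_nonzero_to_simple hf
  have := mono_of_nonzero_from_simple hg
  have : IsIso (f ≫ g) := (hB.2 _).resolve_left (comp_ne_zero_of_mono hf)
  have := mono_of_mono f g
  have := epi_of_epi f g
  exact ⟨isIso_of_mono_of_epi f, isIso_of_mono_of_epi g⟩

namespace IsCFHO

variable {m : ℕ} {N : Fin m → C} (hN : IsCFHO m N)
include hN

lemma le_of_ne_zero {i j : Fin m} {f : N i ⟶ N j} (hf : f ≠ 0) : j ≤ i :=
  not_lt.1 fun hij => hf (hN.forward_orth i j hij f)

lemma le_of_ne_zero_of_simple {S : C} [Simple S] {i j : Fin m} {f : N i ⟶ S} {g : S ⟶ N j}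
    (hf : f ≠ 0) (hg : g ≠ 0) : j ≤ i :=
  have := mono_of_nonzero_from_simple hg
  hN.le_of_ne_zero (f := f ≫ g) (comp_ne_zero_of_mono hf)

lemma exists_iso_of_simple (S : C) [Simple S] : ∃ i, Nonempty (S ≅ N i) := by
  classical
  by_contra! hS
  let insertAt : ℕ → Prop := fun n => n = m ∨ ∃ i : Fin m, i.val = n ∧ ∃ f : N i ⟶ S, f ≠ 0
  have hins : ∃ n, insertAt n := ⟨m, Or.inl rfl⟩
  refine hN.maximal ⟨S, Nat.find hins, Nat.find_min' hins (Or.inl rfl), Simple.isBrick S, ?_, ?_⟩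
  · intro i hi f
    by_contra hf
    exact Nat.find_min hins hi (Or.inr ⟨i, rfl, f, hf⟩)
  · intro j hj g
    by_contra hg
    obtain hk | ⟨i, hik, f, hf⟩ := Nat.find_spec hins
    · omega
    · obtain rfl : j = i := le_antisymm (hN.le_of_ne_zero_of_simple hf hg) (by omega)
      have := ((hN.brick j).isIso_of_ne_zero_of_simple hf hg).1
      exact (hS j).false (asIso f).symm

lemma simple_of_isBot {i : Fin m} (hi : IsBot i) [IsNoetherianObject (N i)] : Simple (N i) := by
  obtain ⟨S, p, hp, hS⟩ := exists_simple_quotient (hN.brick i).1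
  obtain ⟨j, ⟨e⟩⟩ := hN.exists_iso_of_simple S
  have hp0 : p ≠ 0 := fun h => Simple.not_isZero S (IsZero.of_epi_eq_zero p h)
  have he : e.hom ≠ 0 := fun h => Simple.not_isZero S (IsZero.of_mono_eq_zero _ h)
  obtain rfl : j = i := le_antisymm (hN.le_of_ne_zero_of_simple hp0 he) (hi j)
  have := ((hN.brick j).isIso_of_ne_zero_of_simple hp0 he).1
  exact Simple.of_iso (asIso p)

lemma simple_of_isTop {i : Fin m} (hi : IsTop i) [IsArtinianObject (N i)] : Simple (N i) := by
  obtain ⟨Y, hY⟩ := exists_simple_subobject (hN.brick i).1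
  obtain ⟨j, ⟨e⟩⟩ := hN.exists_iso_of_simple (Y : C)
  have ha : Y.arrow ≠ 0 := fun h => Simple.not_isZero _ (IsZero.of_mono_eq_zero _ h)
  have he : e.inv ≠ 0 := fun h => Simple.not_isZero _ (IsZero.of_epi_eq_zero _ h)
  obtain rfl : j = i := le_antisymm (hi j) (hN.le_of_ne_zero_of_simple he ha)
  have := ((hN.brick j).isIso_of_ne_zero_of_simple he ha).2
  exact Simple.of_iso (asIso Y.arrow).symm

end IsCFHO

/-- a complete forward hom-orthogonal sequence contains all simple
objects up to isomorphism, and its first and last terms are simple. -/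
theorem cfho_contains_all_simples
    {C : Type u} [Category.{v} C] [Abelian C]
    [∀ X : C, IsNoetherianObject X] [∀ X : C, IsArtinianObject X]
    (m : ℕ) (hm : 0 < m) (N : Fin m → C) (hN : IsCFHO m N) :
    (∀ S : C, Simple S → ∃ i : Fin m, Nonempty (S ≅ N i)) ∧
    Simple (N ⟨0, hm⟩) ∧ Simple (N ⟨m - 1, Nat.sub_lt hm one_pos⟩) :=
  ⟨fun S _ => hN.exists_iso_of_simple S,
    hN.simple_of_isBot fun j => Nat.zero_le j.val,
    hN.simple_of_isTop fun j => Nat.le_sub_one_of_lt j.isLt⟩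
end

section
/- Let 0 = T₀ ⋖ T₁ ⋖ ⋯ ⋖ T_m = A be a maximal green sequence in an abelian length category, with N_i the minimal extending object realizing T_i = Filt(T_{i-1} ∪ {N_i}). Then Filt(N_i) = T_i ∩ F_{i-1}, where F_{i-1} is the torsion-free class corresponding to T_{i-1}. -/
open CategoryTheory CategoryTheory.Limits

universe v u

variable {C : Type u} [Category.{v} C] [Abelian C]

variable {P : Type*} [LinearOrder P]

/-- A maximal green sequence of torsion classes. -/
structure IsMGS {C : Type u} [Category.{v} C] [Abelian C]
    (m : ℕ) (T : Fin (m + 1) → Set C) : Prop where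
  tors : ∀ i, IsTorsionClass (T i)
  bot : ∀ X ∈ T 0, IsZero X
  top : ∀ X : C, X ∈ T (Fin.last m)
  cover : ∀ i : Fin m, CoversTC (T i.castSucc) (T i.succ)

/-!
Write `T = T_{i-1}`, `T' = T_i`, `F = Filt(N)`, and `A ∗ B` for the class of extensions with
subobject in `A` and quotient in `B`. As `Hom(T, N) = 0` and `Hom(T, -)` is left exact,
`F ⊆ T' ∩ T^⊥`. Conversely, `∗` is associative (pullbacks, resp. pushouts, of short exact
sequences) and minimality of `N` gives `F ∗ T ⊆ T ∗ F`: a non-split extension of `T` by `N` lies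
in `T`, and a split one can be written the other way round. Hence `T ∗ F` is closed under
extensions and contains `T ∪ {N}`, so every `X ∈ T' = Filt(T ∪ {N})` has a subobject in `T` with
quotient in `F`. If moreover `Hom(T, X) = 0`, that subobject is zero and `X ∈ F`.
-/

open ZeroObject Set

section IsSES

variable {X₁ X₂ X₃ : C} {f : X₁ ⟶ X₂} {g : X₂ ⟶ X₃}

theorem IsSES.epi_g (h : IsSES f g) : Epi g :=
  h.choose_spec.epi_g

theorem IsSES.op (h : IsSES f g) : IsSES g.op f.op :=
  ⟨_, h.choose_spec.op⟩

theorem IsSES.unop {Y₁ Y₂ Y₃ : Cᵒᵖ} {f : Y₁ ⟶ Y₂} {g : Y₂ ⟶ Y₃} (h : IsSES f g) :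
    IsSES g.unop f.unop :=
  ⟨_, h.choose_spec.unop⟩

theorem isSES_id_zero (X : C) : IsSES (𝟙 X) (0 : X ⟶ 0) := by
  have : Epi (0 : X ⟶ 0) := ⟨fun g h _ => (isZero_zero C).eq_of_src g h⟩
  exact ⟨by simp, ShortComplex.ShortExact.mk'
    ((ShortComplex.exact_iff_epi _ rfl).2 inferInstance) inferInstance ‹_›⟩

theorem isSES_zero_id (X : C) : IsSES (0 : 0 ⟶ X) (𝟙 X) := by
  have : Mono (0 : 0 ⟶ X) := ⟨fun g h _ => (isZero_zero C).eq_of_tgt g h⟩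
  exact ⟨by simp, ShortComplex.ShortExact.mk'
    ((ShortComplex.exact_iff_mono _ rfl).2 inferInstance) ‹_› inferInstance⟩

theorem IsSES.of_iso (h : IsSES f g) {Y₁ Y₂ Y₃ : C} (e₁ : X₁ ≅ Y₁) (e₂ : X₂ ≅ Y₂)
    (e₃ : X₃ ≅ Y₃) {f' : Y₁ ⟶ Y₂} {g' : Y₂ ⟶ Y₃}
    (comm₁ : e₁.hom ≫ f' = f ≫ e₂.hom) (comm₂ : e₂.hom ≫ g' = g ≫ e₃.hom) :
    IsSES f' g' := by
  obtain ⟨w, hS⟩ := h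
  have w' : f' ≫ g' = 0 := by
    rw [← cancel_epi e₁.hom, reassoc_of% comm₁, comm₂, reassoc_of% w]
    simp
  exact ⟨w', ShortComplex.shortExact_of_iso (ShortComplex.isoMk e₁ e₂ e₃ comm₁ comm₂) hS⟩

theorem IsSES.isIso_g_of_f_eq_zero (h : IsSES f g) (hf : f = 0) : IsIso g := by
  obtain ⟨_, hS⟩ := h
  have := hS.exact.mono_g hf
  have := hS.epi_g
  exact isIso_of_mono_of_epi g

theorem IsSES.exists_isSES_of_retraction (h : IsSES f g) {r : X₂ ⟶ X₁} (hr : f ≫ r = 𝟙 X₁) :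
    ∃ s : X₃ ⟶ X₂, IsSES s r := by
  obtain ⟨_, hS⟩ := h
  let σ := ShortComplex.Splitting.ofExactOfRetraction _ hS.exact r hr hS.epi_g
  refine ⟨σ.s, σ.s_r, ShortComplex.Splitting.shortExact (S := ShortComplex.mk σ.s r σ.s_r)
    { r := g, s := f, f_r := σ.s_g, s_g := hr, id := ?_ }⟩
  rw [add_comm]
  exact σ.id

end IsSES

section Pullback

variable {X₁ X₂ X₃ Y₁ Y₃ : C} {f : X₁ ⟶ X₂} {g : X₂ ⟶ X₃} {w : Y₁ ⟶ X₃} {u : X₃ ⟶ Y₃}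

theorem exists_isSES_pullback_snd (hfg : IsSES f g) :
    ∃ l : X₁ ⟶ pullback g w, IsSES l (pullback.snd g w) := by
  obtain ⟨wfg, hS⟩ := hfg
  have := hS.mono_f
  have := hS.epi_g
  let l : X₁ ⟶ pullback g w := pullback.lift f 0 (by simp [wfg])
  have hl : l ≫ pullback.snd g w = 0 := pullback.lift_snd _ _ _
  have : Mono l := mono_of_mono_fac (pullback.lift_fst _ _ _)
  refine ⟨l, hl, ShortComplex.ShortExact.mk' (ShortComplex.exact_of_f_is_kernel _ ?_) ‹_›
    inferInstance⟩
  refine KernelFork.IsLimit.ofι' l hl fun t ht => ⟨hS.exact.lift (t ≫ pullback.fst g w) ?_, ?_⟩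
  · rw [Category.assoc, pullback.condition, ← Category.assoc, ht, zero_comp]
  · apply pullback.hom_ext
    · rw [Category.assoc, pullback.lift_fst, hS.exact.lift_f]
    · simp [hl, ht]

theorem isSES_pullback_fst (hfg : IsSES f g) (hwu : IsSES w u) :
    IsSES (pullback.fst g w) (g ≫ u) := by
  have := hfg.epi_g
  obtain ⟨wwu, hwu⟩ := hwu
  have := hwu.mono_f
  have := hwu.epi_g
  have w' : pullback.fst g w ≫ g ≫ u = 0 := by
    rw [pullback.condition_assoc, wwu, comp_zero]
  refine ⟨w', ShortComplex.ShortExact.mk' (ShortComplex.exact_of_f_is_kernel _ ?_)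
    inferInstance (epi_comp g u)⟩
  refine KernelFork.IsLimit.ofι' _ w' fun t ht => ?_
  have ht' : (t ≫ g) ≫ u = 0 := by rw [Category.assoc, ht]
  exact ⟨pullback.lift t (hwu.exact.lift (t ≫ g) ht') (hwu.exact.lift_f _ _).symm,
    pullback.lift_fst _ _ _⟩

theorem exists_isSES_pullback_of_isSES (hfg : IsSES f g) (hwu : IsSES w u) :
    ∃ (Z : C) (f' : X₁ ⟶ Z) (g' : Z ⟶ Y₁) (i : Z ⟶ X₂), IsSES f' g' ∧ IsSES i (g ≫ u) := by
  obtain ⟨l, hl⟩ := exists_isSES_pullback_snd (w := w) hfg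
  exact ⟨_, l, _, _, hl, isSES_pullback_fst hfg hwu⟩

end Pullback

theorem exists_isSES_pushout_of_isSES {X₁ X₂ X₃ Y₁ Y₂ : C} {f : X₁ ⟶ X₂} {g : X₂ ⟶ X₃}
    {w : Y₁ ⟶ X₁} {q : X₁ ⟶ Y₂} (hfg : IsSES f g) (hwq : IsSES w q) :
    ∃ (Z : C) (p : X₂ ⟶ Z) (f' : Y₂ ⟶ Z) (g' : Z ⟶ X₃), IsSES (w ≫ f) p ∧ IsSES f' g' := by
  obtain ⟨Z, f', g', i, h₁, h₂⟩ := exists_isSES_pullback_of_isSES hfg.op hwq.op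
  exact ⟨Z.unop, i.unop, g'.unop, f'.unop, h₂.unop, h₁.unop⟩

def extProd (A B : Set C) : Set C :=
  {X | ∃ (X₁ X₃ : C) (f : X₁ ⟶ X) (g : X ⟶ X₃), IsSES f g ∧ X₁ ∈ A ∧ X₃ ∈ B}

local infix:70 " ∗ " => extProd

def Filt (S : Set C) : Set C :=
  {X | ExtClosure S X}

def rightPerp (S : Set C) : Set C :=
  {Y | ∀ X ∈ S, ∀ f : X ⟶ Y, f = 0}

section ExtProd

variable {A A' B B' D : Set C}

@[gcongr]
theorem extProd_mono (hA : A ⊆ A') (hB : B ⊆ B') : A ∗ B ⊆ A' ∗ B' :=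
  fun _ ⟨X₁, X₃, f, g, hfg, h₁, h₃⟩ => ⟨X₁, X₃, f, g, hfg, hA h₁, hB h₃⟩

theorem extProd_assoc : (A ∗ B) ∗ D = A ∗ (B ∗ D) := by
  ext X
  constructor
  · rintro ⟨X₁, X₃, f, g, hfg, ⟨Y₁, Y₂, w, q, hwq, hY₁, hY₂⟩, hX₃⟩
    obtain ⟨Z, p, f', g', h₁, h₂⟩ := exists_isSES_pushout_of_isSES hfg hwq
    exact ⟨Y₁, Z, w ≫ f, p, h₁, hY₁, Y₂, X₃, f', g', h₂, hY₂, hX₃⟩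
  · rintro ⟨X₁, X₃, f, g, hfg, hX₁, ⟨Y₁, Y₃, w, u, hwu, hY₁, hY₃⟩⟩
    obtain ⟨Z, f', g', i, h₁, h₂⟩ := exists_isSES_pullback_of_isSES hfg hwu
    exact ⟨Z, Y₃, i, g ≫ u, h₂, ⟨X₁, Y₁, f', g', h₁, hX₁, hY₁⟩, hY₃⟩

theorem extProd_self_subset_iff : A ∗ A ⊆ A ↔ ExtClosedSet A :=
  ⟨fun h _ _ _ f g hfg h₁ h₃ => h ⟨_, _, f, g, hfg, h₁, h₃⟩,
    fun h _ ⟨_, _, f, g, hfg, h₁, h₃⟩ => h f g hfg h₁ h₃⟩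

theorem subset_extProd_of_zero_mem_right (hB : ∀ Z, IsZero Z → Z ∈ B) : A ⊆ A ∗ B :=
  fun X hX => ⟨X, 0, 𝟙 X, 0, isSES_id_zero X, hX, hB _ (isZero_zero C)⟩

theorem subset_extProd_of_zero_mem_left (hA : ∀ Z, IsZero Z → Z ∈ A) : B ⊆ A ∗ B :=
  fun X hX => ⟨0, X, 0, 𝟙 X, isSES_zero_id X, hA _ (isZero_zero C), hX⟩

theorem isoClosed_extProd : IsoClosed (A ∗ B) :=
  fun _ _ e ⟨X₁, X₃, f, g, hfg, h₁, h₃⟩ =>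
    ⟨X₁, X₃, f ≫ e.hom, e.inv ≫ g,
      hfg.of_iso (Iso.refl _) e (Iso.refl _) (by simp) (by simp), h₁, h₃⟩

theorem singleton_extProd_subset_of_iso {X Y : C} (e : X ≅ Y) : {Y} ∗ B ⊆ {X} ∗ B := by
  rintro Z ⟨_, X₃, f, g, hfg, rfl, h₃⟩
  exact ⟨X, X₃, e.hom ≫ f, g, hfg.of_iso e.symm (Iso.refl _) (Iso.refl _) (by simp) (by simp),
    rfl, h₃⟩

theorem extProd_inter_rightPerp_subset (hB : IsoClosed B) : (A ∗ B) ∩ rightPerp A ⊆ B := by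
  rintro X ⟨⟨X₁, X₃, f, g, hfg, h₁, h₃⟩, hperp⟩
  have := hfg.isIso_g_of_f_eq_zero (hperp X₁ h₁ f)
  exact hB (asIso g).symm h₃

theorem extProd_subset_of_isZero_left (hA : ∀ Z ∈ A, IsZero Z) (hB : IsoClosed B) : A ∗ B ⊆ B :=
  fun _ hX => extProd_inter_rightPerp_subset hB ⟨hX, fun Z hZ _ => (hA Z hZ).eq_of_src _ _⟩

theorem extClosedSet_extProd (hBA : B ∗ A ⊆ A ∗ B) (hA : ExtClosedSet A) (hB : ExtClosedSet B) :
    ExtClosedSet (A ∗ B) := by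
  rw [← extProd_self_subset_iff] at hA hB ⊢
  calc (A ∗ B) ∗ (A ∗ B) = A ∗ ((B ∗ A) ∗ B) := by simp only [extProd_assoc]
    _ ⊆ A ∗ ((A ∗ B) ∗ B) := by gcongr
    _ = (A ∗ A) ∗ (B ∗ B) := by simp only [extProd_assoc]
    _ ⊆ A ∗ B := by gcongr

end ExtProd

section Filt

variable {S D : Set C}

theorem filt_minimal (hS : S ⊆ D) (hzero : ∀ X, IsZero X → X ∈ D) (hiso : IsoClosed D)
    (hext : ExtClosedSet D) : Filt S ⊆ D := by
  intro X hX
  induction hX with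
  | of X h => exact hS h
  | zero X h => exact hzero X h
  | iso X Y e _ ih => exact hiso e ih
  | ext X₁ X₂ X₃ f g hfg _ _ ih₁ ih₃ => exact hext f g hfg ih₁ ih₃

theorem isoClosed_filt : IsoClosed (Filt S) :=
  fun X Y e h => ExtClosure.iso X Y e h

theorem extClosedSet_filt : ExtClosedSet (Filt S) :=
  fun X₁ X₂ X₃ f g hfg h₁ h₃ => ExtClosure.ext X₁ X₂ X₃ f g hfg h₁ h₃

theorem filt_mono {S' : Set C} (h : S ⊆ S') : Filt S ⊆ Filt S' :=
  filt_minimal (h.trans fun X => ExtClosure.of X) ExtClosure.zero isoClosed_filt extClosedSet_filt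

theorem isoClosed_rightPerp : IsoClosed (rightPerp S) := by
  intro X Y e hX W hW f
  rw [← Category.comp_id f, ← e.inv_hom_id, ← Category.assoc, hX W hW (f ≫ e.inv), zero_comp]

theorem extClosedSet_rightPerp : ExtClosedSet (rightPerp S) := by
  intro X₁ X₂ X₃ f g hfg h₁ h₃ W hW φ
  obtain ⟨_, hS⟩ := hfg
  have := hS.mono_f
  have hφ : φ ≫ g = 0 := h₃ W hW _
  rw [← hS.exact.lift_f φ hφ, h₁ W hW (hS.exact.lift φ hφ), zero_comp]

theorem filt_subset_rightPerp (h : S ⊆ rightPerp D) : Filt S ⊆ rightPerp D :=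
  filt_minimal h (fun _ hX _ _ _ => hX.eq_of_tgt _ _) isoClosed_rightPerp extClosedSet_rightPerp

end Filt

section MinimalExtending

variable {T : Set C} {N : C}

theorem singleton_extProd_subset_of_isMinimalExtending (hME : IsMinimalExtending T N) :
    {N} ∗ T ⊆ T ∗ Filt {N} := by
  rintro X ⟨_, W, a, b, hab, rfl, hW⟩
  by_cases hsplit : ∃ r, a ≫ r = 𝟙 _
  · obtain ⟨r, hr⟩ := hsplit
    obtain ⟨s, hs⟩ := hab.exists_isSES_of_retraction hr
    exact ⟨W, _, s, r, hs, hW, ExtClosure.of _ rfl⟩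
  · exact subset_extProd_of_zero_mem_right ExtClosure.zero (hME.ext_mem a b hab hW hsplit)

theorem filt_extProd_subset (hiso : IsoClosed T) (hME : IsMinimalExtending T N) :
    Filt {N} ∗ T ⊆ T ∗ Filt {N} := by
  rintro X ⟨Q, W, a, b, hab, hQ, hW⟩
  suffices ∀ Q ∈ Filt {N}, {Q} ∗ T ⊆ T ∗ Filt {N} from this Q hQ ⟨Q, W, a, b, hab, rfl, hW⟩
  intro Q hQ
  induction hQ with
  | of X h =>
    rw [mem_singleton_iff.1 h]
    exact singleton_extProd_subset_of_isMinimalExtending hME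
  | zero X h =>
    exact (extProd_subset_of_isZero_left (fun _ hZ => hZ ▸ h) hiso).trans
      (subset_extProd_of_zero_mem_right ExtClosure.zero)
  | iso X Y e _ ih => exact (singleton_extProd_subset_of_iso e).trans ih
  | ext X₁ X₂ X₃ f g hfg _ _ ih₁ ih₃ =>
    calc {X₂} ∗ T ⊆ ({X₁} ∗ {X₃}) ∗ T := by
          gcongr
          exact singleton_subset_iff.2 ⟨X₁, X₃, f, g, hfg, rfl, rfl⟩
      _ = {X₁} ∗ ({X₃} ∗ T) := extProd_assoc
      _ ⊆ ({X₁} ∗ T) ∗ Filt {N} := by rw [extProd_assoc]; gcongr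
      _ ⊆ T ∗ (Filt {N} ∗ Filt {N}) := by rw [← extProd_assoc]; gcongr
      _ ⊆ T ∗ Filt {N} := by gcongr; exact extProd_self_subset_iff.2 extClosedSet_filt

theorem filt_union_subset_extProd (hzero : ∀ X, IsZero X → X ∈ T) (hiso : IsoClosed T)
    (hext : ExtClosedSet T) (hME : IsMinimalExtending T N) :
    Filt (T ∪ {N}) ⊆ T ∗ Filt {N} := by
  refine filt_minimal (union_subset ?_ ?_) (fun X hX => ?_) isoClosed_extProd
    (extClosedSet_extProd (filt_extProd_subset hiso hME) hext extClosedSet_filt)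
  · exact subset_extProd_of_zero_mem_right ExtClosure.zero
  · exact singleton_subset_iff.2 (subset_extProd_of_zero_mem_left hzero (ExtClosure.of N rfl))
  · exact subset_extProd_of_zero_mem_right ExtClosure.zero (hzero X hX)

end MinimalExtending

/-- for a maximal green sequence with minimal extending bricks
`N i`, one has `Filt(N i) = T i ∩ F (i-1)` where `F (i-1)` is the torsion-free
class corresponding to `T (i-1)`. -/
theorem filt_brick_eq_torsion_inter_free
    {C : Type u} [Category.{v} C] [Abelian C]
    [∀ X : C, IsNoetherianObject X] [∀ X : C, IsArtinianObject X]
    (m : ℕ) (T : Fin (m + 1) → Set C) (hT : IsMGS m T) (N : Fin m → C)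
    (hN : ∀ i : Fin m, IsMinimalExtending (T i.castSucc) (N i) ∧
        T i.succ = {X : C | ExtClosure (T i.castSucc ∪ {N i}) X}) :
    ∀ i : Fin m, {X : C | ExtClosure {N i} X} =
      T i.succ ∩ {X : C | ∀ W ∈ T i.castSucc, ∀ f : W ⟶ X, f = 0} := by
  intro i
  obtain ⟨hME, hsucc⟩ := hN i
  obtain ⟨hzero, hiso, hext, -⟩ := hT.tors i.castSucc
  change Filt {N i} = T i.succ ∩ rightPerp (T i.castSucc)
  rw [hsucc]
  refine subset_antisymm (subset_inter (filt_mono subset_union_right) ?_) ?_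
  · exact filt_subset_rightPerp (singleton_subset_iff.2 fun W hW => hME.hom_zero hW)
  · rintro X ⟨hX, hperp⟩
    exact extProd_inter_rightPerp_subset isoClosed_filt
      ⟨filt_union_subset_extProd hzero hiso hext hME hX, hperp⟩
end
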